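/- arXiv:1311.4334 — 3 statements merged into one kernel-verified Lean document; each statement's English description precedes it below -/
import Mathlib

section
/- With U = λA₁ + A₂ (A₁ = diag(−i,i), A₂ off-diagonal with entries q, r) and V = λ³A₁ + λ²A₂ + λh₁ + h₀, where h₁ has diagonal (−(i/2)qr, (i/2)qr) and off-diagonal ((i/2)q_x, −(i/2)r_x), and h₀ has diagonal ((1/4)(r q_x − q r_x), −(1/4)(r q_x − q r_x)) and off-diagonal ((1/2)q²r − (1/4)q_xx, (1/2)q r² − (1/4)r_xx), the zero-curvature equation U_t − V_x + [U,V] = 0 holds identically in λ if and only if q_t = −(1/4)q_xxx + (3/2) q q_x r and r_t = −(1/4)r_xxx + (3/2) r r_x q. -/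
/-!
Expand `U_t − V_x + [U, V]` in powers of `λ`. The `λ⁴` and `λ³` coefficients cancel identically,
and the `λ²` and `λ¹` coefficients vanish because `h₁` and `h₀` solve `[A₁, h₁] = ∂ₓA₂` and
`[A₁, h₀] + [A₂, h₁] = ∂ₓh₁`. What remains is the `λ`-free matrix `∂ₜA₂ − ∂ₓh₀ + [A₂, h₀]`,
which is off-diagonal with entries `q_t − (−¼ q_xxx + ³⁄₂ q q_x r)` and
`r_t − (−¼ r_xxx + ³⁄₂ r r_x q)`.
-/

open Complex Matrix

theorem zeroCurvature_eq_constantTerm {R A : Type*} [CommRing R] [Ring A] [Algebra R A] (l : R)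
    (A₁ A₂ h₁ h₀ W₂ W₁ W₀ Ut : A)
    (hW₂ : A₁ * h₁ - h₁ * A₁ = W₂)
    (hW₁ : (A₁ * h₀ - h₀ * A₁) + (A₂ * h₁ - h₁ * A₂) = W₁) :
    Ut - (l ^ 2 • W₂ + l • W₁ + W₀) +
        ((l • A₁ + A₂) * (l ^ 3 • A₁ + l ^ 2 • A₂ + l • h₁ + h₀) -
          (l ^ 3 • A₁ + l ^ 2 • A₂ + l • h₁ + h₀) * (l • A₁ + A₂)) =
      Ut - W₀ + (A₂ * h₀ - h₀ * A₂) := by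
  subst hW₂ hW₁
  simp only [add_mul, mul_add, smul_mul_assoc, mul_smul_comm]
  module

theorem Matrix.of_fin_two_eq {α : Type*} {a b c d e f g h : α}
    (hae : a = e) (hbf : b = f) (hcg : c = g) (hdh : d = h) :
    !![a, b; c, d] = !![e, f; g, h] := by
  subst_vars; rfl

theorem Matrix.commutator_fin_two {α : Type*} [CommRing α] (a b c d e f g h : α) :
    !![a, b; c, d] * !![e, f; g, h] - !![e, f; g, h] * !![a, b; c, d] =
      !![b * g - c * f, a * f + b * h - e * b - f * d;
         c * e + d * g - g * a - h * c, c * f - b * g] := by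
  rw [mul_fin_two, mul_fin_two]
  ext i j
  fin_cases i <;> fin_cases j <;> simp <;> ring

noncomputable section

namespace CoupledKdV

variable (q r qx rx qxx rxx qxxx rxxx qt rt : ℂ)

def A₁ : Matrix (Fin 2) (Fin 2) ℂ := !![-I, 0; 0, I]

def A₂ : Matrix (Fin 2) (Fin 2) ℂ := !![0, q; r, 0]

def h₁ : Matrix (Fin 2) (Fin 2) ℂ :=
  !![-(I / 2) * q * r, (I / 2) * qx; -(I / 2) * rx, (I / 2) * q * r]

def h₀ : Matrix (Fin 2) (Fin 2) ℂ :=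
  !![(1 / 4 : ℂ) * (r * qx - q * rx), (1 / 2 : ℂ) * q ^ 2 * r - (1 / 4 : ℂ) * qxx;
     (1 / 2 : ℂ) * q * r ^ 2 - (1 / 4 : ℂ) * rxx, -(1 / 4 : ℂ) * (r * qx - q * rx)]

-- The x-derivatives of `h₁` and `h₀`, by the product rule.
def h₁x : Matrix (Fin 2) (Fin 2) ℂ :=
  !![-(I / 2) * (qx * r + q * rx), (I / 2) * qxx; -(I / 2) * rxx, (I / 2) * (qx * r + q * rx)]

def h₀x : Matrix (Fin 2) (Fin 2) ℂ :=
  !![(1 / 4 : ℂ) * (rx * qx + r * qxx - qx * rx - q * rxx),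
       (1 / 2 : ℂ) * (2 * q * qx * r + q ^ 2 * rx) - (1 / 4 : ℂ) * qxxx;
     (1 / 2 : ℂ) * (qx * r ^ 2 + 2 * q * r * rx) - (1 / 4 : ℂ) * rxxx,
       -(1 / 4 : ℂ) * (rx * qx + r * qxx - qx * rx - q * rxx)]

theorem A₁_commutator (a b c d : ℂ) :
    A₁ * !![a, b; c, d] - !![a, b; c, d] * A₁ = !![0, -2 * I * b; 2 * I * c, 0] := by
  rw [A₁, commutator_fin_two]
  apply of_fin_two_eq <;> ring

theorem A₁_commutator_h₁ : A₁ * h₁ q r qx rx - h₁ q r qx rx * A₁ = A₂ qx rx := by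
  rw [h₁, A₁_commutator, A₂]
  apply of_fin_two_eq
  · rfl
  · linear_combination (-qx) * I_sq
  · linear_combination (-rx) * I_sq
  · rfl

theorem A₁_commutator_h₀_add_A₂_commutator_h₁ :
    (A₁ * h₀ q r qx rx qxx rxx - h₀ q r qx rx qxx rxx * A₁) +
        (A₂ q r * h₁ q r qx rx - h₁ q r qx rx * A₂ q r) = h₁x q r qx rx qxx rxx := by
  rw [h₀, A₁_commutator, A₂, h₁, commutator_fin_two, h₁x]
  simp only [of_add_of, cons_add_cons, empty_add_empty]
  apply of_fin_two_eq <;> ring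

theorem zeroCurvature_residual :
    A₂ qt rt - h₀x q r qx rx qxx rxx qxxx rxxx +
        (A₂ q r * h₀ q r qx rx qxx rxx - h₀ q r qx rx qxx rxx * A₂ q r) =
      A₂ (qt - (-(1 / 4 : ℂ) * qxxx + (3 / 2 : ℂ) * q * qx * r))
        (rt - (-(1 / 4 : ℂ) * rxxx + (3 / 2 : ℂ) * r * rx * q)) := by
  simp only [A₂, h₀, h₀x, commutator_fin_two, of_add_of, of_sub_of, cons_add_cons, cons_sub_cons,
    empty_add_empty, empty_sub_empty]
  apply of_fin_two_eq <;> ring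

theorem A₂_eq_zero_iff {q r : ℂ} : A₂ q r = 0 ↔ q = 0 ∧ r = 0 := by
  simp [A₂, ← Matrix.ext_iff, Fin.forall_fin_two]

end CoupledKdV

end

theorem coupled_kdv_nls_zero_curvature_general
    (q r qx rx qxx rxx qxxx rxxx qt rt : ℝ → ℝ → ℂ) :
    let A1 : Matrix (Fin 2) (Fin 2) ℂ := !![-I, 0; 0, I]
    let A2 : ℝ → ℝ → Matrix (Fin 2) (Fin 2) ℂ := fun x t => !![0, q x t; r x t, 0]
    let h1 : ℝ → ℝ → Matrix (Fin 2) (Fin 2) ℂ := fun x t =>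
      !![-(I / 2) * q x t * r x t, (I / 2) * qx x t;
         -(I / 2) * rx x t, (I / 2) * q x t * r x t]
    let h0 : ℝ → ℝ → Matrix (Fin 2) (Fin 2) ℂ := fun x t =>
      !![(1 / 4 : ℂ) * (r x t * qx x t - q x t * rx x t),
           (1 / 2 : ℂ) * (q x t) ^ 2 * r x t - (1 / 4 : ℂ) * qxx x t;
         (1 / 2 : ℂ) * q x t * (r x t) ^ 2 - (1 / 4 : ℂ) * rxx x t,
           -(1 / 4 : ℂ) * (r x t * qx x t - q x t * rx x t)]
    let U : ℂ → ℝ → ℝ → Matrix (Fin 2) (Fin 2) ℂ := fun l x t => l • A1 + A2 x t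
    let V : ℂ → ℝ → ℝ → Matrix (Fin 2) (Fin 2) ℂ := fun l x t =>
      (l ^ 3) • A1 + (l ^ 2) • A2 x t + l • h1 x t + h0 x t
    let Ut : ℝ → ℝ → Matrix (Fin 2) (Fin 2) ℂ := fun x t => !![0, qt x t; rt x t, 0]
    let Vx : ℂ → ℝ → ℝ → Matrix (Fin 2) (Fin 2) ℂ := fun l x t =>
      (l ^ 2) • !![0, qx x t; rx x t, 0] +
        l • !![-(I / 2) * (qx x t * r x t + q x t * rx x t), (I / 2) * qxx x t;
               -(I / 2) * rxx x t, (I / 2) * (qx x t * r x t + q x t * rx x t)] +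
        !![(1 / 4 : ℂ) * (rx x t * qx x t + r x t * qxx x t - qx x t * rx x t - q x t * rxx x t),
             (1 / 2 : ℂ) * (2 * q x t * qx x t * r x t + (q x t) ^ 2 * rx x t) -
               (1 / 4 : ℂ) * qxxx x t;
           (1 / 2 : ℂ) * (qx x t * (r x t) ^ 2 + 2 * q x t * r x t * rx x t) -
             (1 / 4 : ℂ) * rxxx x t,
             -(1 / 4 : ℂ) * (rx x t * qx x t + r x t * qxx x t - qx x t * rx x t - q x t * rxx x t)]
    (∀ (l : ℂ) (x t : ℝ),
        Ut x t - Vx l x t + (U l x t * V l x t - V l x t * U l x t) = 0) ↔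
      (∀ x t : ℝ,
        qt x t = -(1 / 4 : ℂ) * qxxx x t + (3 / 2 : ℂ) * q x t * qx x t * r x t ∧
          rt x t = -(1 / 4 : ℂ) * rxxx x t + (3 / 2 : ℂ) * r x t * rx x t * q x t) := by
  intro A1 A2 h1 h0 U V Ut Vx
  have residual : ∀ l x t, Ut x t - Vx l x t + (U l x t * V l x t - V l x t * U l x t) =
      CoupledKdV.A₂ (qt x t - (-(1 / 4 : ℂ) * qxxx x t + (3 / 2 : ℂ) * q x t * qx x t * r x t))
        (rt x t - (-(1 / 4 : ℂ) * rxxx x t + (3 / 2 : ℂ) * r x t * rx x t * q x t)) :=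
    fun l x t => (zeroCurvature_eq_constantTerm l _ _ _ _ _ _ _ _ (CoupledKdV.A₁_commutator_h₁ ..)
      (CoupledKdV.A₁_commutator_h₀_add_A₂_commutator_h₁ ..)).trans
        (CoupledKdV.zeroCurvature_residual ..)
  simp only [residual, CoupledKdV.A₂_eq_zero_iff, sub_eq_zero, forall_const]

/-- Zero-curvature formulation of the coupled KdV-type NLS equations:
with `U = λA₁ + A₂` and `V = λ³A₁ + λ²A₂ + λh₁ + h₀` as in the text, the zero-curvature
equation `U_t − V_x + [U,V] = 0` holds identically in `λ` iff
`q_t = −(1/4)q_xxx + (3/2) q q_x r` and `r_t = −(1/4)r_xxx + (3/2) r r_x q`. -/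
theorem coupled_kdv_nls_zero_curvature
    (q r qx rx qxx rxx qxxx rxxx qt rt : ℝ → ℝ → ℂ)
    (hqx : ∀ x t, HasDerivAt (fun x' => q x' t) (qx x t) x)
    (hrx : ∀ x t, HasDerivAt (fun x' => r x' t) (rx x t) x)
    (hqxx : ∀ x t, HasDerivAt (fun x' => qx x' t) (qxx x t) x)
    (hrxx : ∀ x t, HasDerivAt (fun x' => rx x' t) (rxx x t) x)
    (hqxxx : ∀ x t, HasDerivAt (fun x' => qxx x' t) (qxxx x t) x)
    (hrxxx : ∀ x t, HasDerivAt (fun x' => rxx x' t) (rxxx x t) x)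
    (hqt : ∀ x t, HasDerivAt (fun t' => q x t') (qt x t) t)
    (hrt : ∀ x t, HasDerivAt (fun t' => r x t') (rt x t) t) :
    let A1 : Matrix (Fin 2) (Fin 2) ℂ := !![-I, 0; 0, I]
    let A2 : ℝ → ℝ → Matrix (Fin 2) (Fin 2) ℂ := fun x t => !![0, q x t; r x t, 0]
    let h1 : ℝ → ℝ → Matrix (Fin 2) (Fin 2) ℂ := fun x t =>
      !![-(I / 2) * q x t * r x t, (I / 2) * qx x t;
         -(I / 2) * rx x t, (I / 2) * q x t * r x t]
    let h0 : ℝ → ℝ → Matrix (Fin 2) (Fin 2) ℂ := fun x t =>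
      !![(1 / 4 : ℂ) * (r x t * qx x t - q x t * rx x t),
           (1 / 2 : ℂ) * (q x t) ^ 2 * r x t - (1 / 4 : ℂ) * qxx x t;
         (1 / 2 : ℂ) * q x t * (r x t) ^ 2 - (1 / 4 : ℂ) * rxx x t,
           -(1 / 4 : ℂ) * (r x t * qx x t - q x t * rx x t)]
    let U : ℂ → ℝ → ℝ → Matrix (Fin 2) (Fin 2) ℂ := fun l x t => l • A1 + A2 x t
    let V : ℂ → ℝ → ℝ → Matrix (Fin 2) (Fin 2) ℂ := fun l x t =>
      (l ^ 3) • A1 + (l ^ 2) • A2 x t + l • h1 x t + h0 x t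
    let Ut : ℝ → ℝ → Matrix (Fin 2) (Fin 2) ℂ := fun x t => !![0, qt x t; rt x t, 0]
    let Vx : ℂ → ℝ → ℝ → Matrix (Fin 2) (Fin 2) ℂ := fun l x t =>
      (l ^ 2) • !![0, qx x t; rx x t, 0] +
        l • !![-(I / 2) * (qx x t * r x t + q x t * rx x t), (I / 2) * qxx x t;
               -(I / 2) * rxx x t, (I / 2) * (qx x t * r x t + q x t * rx x t)] +
        !![(1 / 4 : ℂ) * (rx x t * qx x t + r x t * qxx x t - qx x t * rx x t - q x t * rxx x t),
             (1 / 2 : ℂ) * (2 * q x t * qx x t * r x t + (q x t) ^ 2 * rx x t) -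
               (1 / 4 : ℂ) * qxxx x t;
           (1 / 2 : ℂ) * (qx x t * (r x t) ^ 2 + 2 * q x t * r x t * rx x t) -
             (1 / 4 : ℂ) * rxxx x t,
             -(1 / 4 : ℂ) * (rx x t * qx x t + r x t * qxx x t - qx x t * rx x t - q x t * rxx x t)]
    (∀ (l : ℂ) (x t : ℝ),
        Ut x t - Vx l x t + (U l x t * V l x t - V l x t * U l x t) = 0) ↔
      (∀ x t : ℝ,
        qt x t = -(1 / 4 : ℂ) * qxxx x t + (3 / 2 : ℂ) * q x t * qx x t * r x t ∧
          rt x t = -(1 / 4 : ℂ) * rxxx x t + (3 / 2 : ℂ) * r x t * rx x t * q x t) :=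
  coupled_kdv_nls_zero_curvature_general q r qx rx qxx rxx qxxx rxxx qt rt
end

section
/- With the AKNS recursion data above, defining (λⁿV)₊ = Σ_{m=0}^n λ^{n−m}(a_m σ₃ + b_m σ₊ + c_m σ₋) and U = −iλσ₃ + qσ₊ + rσ₋, the matrix (λⁿV)₊,x − [U, (λⁿV)₊] equals −2i b_{n+1} σ₊ + 2i c_{n+1} σ₋; in particular it contains no σ₃ component and no positive powers of λ. -/
open Complex Matrix Finset

/-! The truncated series `(λⁿV)₊` and `U` are combinations of `σ₃, σ₊, σ₋`, so the identity is a
statement about three scalar coefficients. The commutation relations `[σ₃, σ₊] = 2σ₊`,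
`[σ₃, σ₋] = -2σ₋`, `[σ₊, σ₋] = σ₃` make the `σ₃` coefficient cancel term by term, and in the
off-diagonal coefficients the recursion shifts `b_m ↦ b_{m+1}`, which against the factor `λ` of `U`
telescopes to the single boundary term `b_{n+1}` because `b₀ = 0` (likewise for `c`). -/

section SL2

variable {R : Type*} [CommRing R]

def sl2Comb (a b c : R) : Matrix (Fin 2) (Fin 2) R :=
  a • !![1, 0; 0, -1] + b • !![0, 1; 0, 0] + c • !![0, 0; 1, 0]

theorem sl2Comb_eq (a b c : R) : sl2Comb a b c = !![a, b; c, -a] := by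
  ext i j; fin_cases i <;> fin_cases j <;> simp [sl2Comb]

theorem sum_smul_sl2Comb {ι : Type*} (s : Finset ι) (k a b c : ι → R) :
    ∑ i ∈ s, k i • sl2Comb (a i) (b i) (c i) =
      sl2Comb (∑ i ∈ s, k i * a i) (∑ i ∈ s, k i * b i) (∑ i ∈ s, k i * c i) := by
  simp only [sl2Comb, smul_add, smul_smul, sum_add_distrib, ← sum_smul]

theorem sl2Comb_sub (a b c a' b' c' : R) :
    sl2Comb a b c - sl2Comb a' b' c' = sl2Comb (a - a') (b - b') (c - c') := by
  simp only [sl2Comb, sub_smul]; abel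

theorem sl2Comb_commutator (u3 up um w3 wp wm : R) :
    sl2Comb u3 up um * sl2Comb w3 wp wm - sl2Comb w3 wp wm * sl2Comb u3 up um =
      sl2Comb (up * wm - um * wp) (2 * (u3 * wp - up * w3)) (2 * (um * w3 - u3 * wm)) := by
  simp only [sl2Comb_eq]; ext i j; fin_cases i <;> fin_cases j <;> simp <;> ring

end SL2

theorem mul_sum_range_pow_sub_mul_add {R : Type*} [CommRing R] (l : R) (f : ℕ → R) (n : ℕ) :
    l * ∑ m ∈ range (n + 1), l ^ (n - m) * f m + f (n + 1) =
      ∑ m ∈ range (n + 1), l ^ (n - m) * f (m + 1) + l ^ (n + 1) * f 0 := by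
  have hshift := sum_range_succ' (fun m => l ^ (n + 1 - m) * f m) (n + 1)
  rw [sum_range_succ] at hshift
  simp only [Nat.sub_self, pow_zero, one_mul, Nat.sub_zero, Nat.add_sub_add_right] at hshift
  rw [mul_sum, ← hshift]
  congr 1
  refine sum_congr rfl fun m hm => ?_
  rw [Nat.sub_add_comm (Nat.le_of_lt_succ (mem_range.mp hm)), pow_succ]
  ring

theorem akns_truncation_identity_general (n : ℕ) (q r : ℝ → ℂ) (a b c : ℕ → ℝ → ℂ)
    (ha : ∀ m x, HasDerivAt (a m) (q x * c m x - r x * b m x) x)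
    (hb : ∀ m x, HasDerivAt (b m) (-2 * I * b (m + 1) x - 2 * q x * a m x) x)
    (hc : ∀ m x, HasDerivAt (c m) (2 * I * c (m + 1) x + 2 * r x * a m x) x)
    (hb0 : ∀ x, b 0 x = 0) (hc0 : ∀ x, c 0 x = 0) :
    let s3 : Matrix (Fin 2) (Fin 2) ℂ := !![1, 0; 0, -1]
    let sp : Matrix (Fin 2) (Fin 2) ℂ := !![0, 1; 0, 0]
    let sm : Matrix (Fin 2) (Fin 2) ℂ := !![0, 0; 1, 0]
    let U : ℂ → ℝ → Matrix (Fin 2) (Fin 2) ℂ := fun l x =>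
      (-I * l) • s3 + q x • sp + r x • sm
    let W : ℂ → ℝ → Matrix (Fin 2) (Fin 2) ℂ := fun l x =>
      ∑ m ∈ range (n + 1),
        (l ^ (n - m)) • (a m x • s3 + b m x • sp + c m x • sm)
    let Wx : ℂ → ℝ → Matrix (Fin 2) (Fin 2) ℂ := fun l x =>
      ∑ m ∈ range (n + 1),
        (l ^ (n - m)) • (deriv (a m) x • s3 + deriv (b m) x • sp + deriv (c m) x • sm)
    ∀ (l : ℂ) (x : ℝ),
      Wx l x - (U l x * W l x - W l x * U l x) =
        (-2 * I * b (n + 1) x) • sp + (2 * I * c (n + 1) x) • sm := by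
  intro s3 sp sm U W Wx l x
  have hU : U l x = sl2Comb (-I * l) (q x) (r x) := rfl
  have hW : W l x = ∑ m ∈ range (n + 1), l ^ (n - m) • sl2Comb (a m x) (b m x) (c m x) := rfl
  have hWx : Wx l x = ∑ m ∈ range (n + 1),
      l ^ (n - m) • sl2Comb (deriv (a m) x) (deriv (b m) x) (deriv (c m) x) := rfl
  have hRHS : (-2 * I * b (n + 1) x) • sp + (2 * I * c (n + 1) x) • sm =
      sl2Comb 0 (-2 * I * b (n + 1) x) (2 * I * c (n + 1) x) := by
    rw [sl2Comb, zero_smul, zero_add]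
  rw [hRHS, hU, hW, hWx]
  simp only [(ha _ x).deriv, (hb _ x).deriv, (hc _ x).deriv, sum_smul_sl2Comb]
  rw [sl2Comb_commutator, sl2Comb_sub]
  have hb_telescope := mul_sum_range_pow_sub_mul_add l (fun m => b m x) n
  have hc_telescope := mul_sum_range_pow_sub_mul_add l (fun m => c m x) n
  simp only [hb0, hc0, mul_zero, add_zero] at hb_telescope hc_telescope
  congr 1 <;>
    simp only [mul_sub, mul_add, sum_sub_distrib, sum_add_distrib, ← mul_sum,
      mul_left_comm (l ^ _)]
  · ring
  · linear_combination (2 * I) * hb_telescope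
  · linear_combination (-2 * I) * hc_telescope

/-- With the AKNS recursion data, `(λⁿV)₊,x − [U, (λⁿV)₊] = −2i b_{n+1} σ₊ + 2i c_{n+1} σ₋`:
in particular it has no `σ₃` component and no positive powers of `λ`. -/
theorem akns_truncation_identity (n : ℕ) (α : ℂ) (q r : ℝ → ℂ) (a b c : ℕ → ℝ → ℂ)
    (ha : ∀ m x, HasDerivAt (a m) (q x * c m x - r x * b m x) x)
    (hb : ∀ m x, HasDerivAt (b m) (-2 * I * b (m + 1) x - 2 * q x * a m x) x)
    (hc : ∀ m x, HasDerivAt (c m) (2 * I * c (m + 1) x + 2 * r x * a m x) x)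
    (ha0 : ∀ x, a 0 x = α) (hb0 : ∀ x, b 0 x = 0) (hc0 : ∀ x, c 0 x = 0) :
    let s3 : Matrix (Fin 2) (Fin 2) ℂ := !![1, 0; 0, -1]
    let sp : Matrix (Fin 2) (Fin 2) ℂ := !![0, 1; 0, 0]
    let sm : Matrix (Fin 2) (Fin 2) ℂ := !![0, 0; 1, 0]
    let U : ℂ → ℝ → Matrix (Fin 2) (Fin 2) ℂ := fun l x =>
      (-I * l) • s3 + q x • sp + r x • sm
    let W : ℂ → ℝ → Matrix (Fin 2) (Fin 2) ℂ := fun l x =>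
      ∑ m ∈ range (n + 1),
        (l ^ (n - m)) • (a m x • s3 + b m x • sp + c m x • sm)
    let Wx : ℂ → ℝ → Matrix (Fin 2) (Fin 2) ℂ := fun l x =>
      ∑ m ∈ range (n + 1),
        (l ^ (n - m)) • (deriv (a m) x • s3 + deriv (b m) x • sp + deriv (c m) x • sm)
    ∀ (l : ℂ) (x : ℝ),
      Wx l x - (U l x * W l x - W l x * U l x) =
        (-2 * I * b (n + 1) x) • sp + (2 * I * c (n + 1) x) • sm :=
  akns_truncation_identity_general n q r a b c ha hb hc hb0 hc0
end

section
/- For the Kaup–Newell system, with ρ(n) = (λ^{2n+2}V)₊ = Σ_{j=0}^{n} (a_{2j}λ^{2(n−j)+2}σ₃ + b_{2j+1}λ^{2(n−j)+1}σ₊ + c_{2j+1}λ^{2(n−j)+1}σ₋) and U = −iλ²σ₃ + λqσ₊ + λrσ₋, one has ρ(n)_x − [U, ρ(n)] = λ(b_{2n+1,x} σ₊ + c_{2n+1,x} σ₋), provided the coefficients satisfy the Kaup–Newell recursion relations. -/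
/-!
Writing every traceless `2 × 2` matrix as `a σ₃ + b σ₊ + c σ₋`, the commutator of `U` with the
`j`-th summand of `ρ(n)` is explicit. The recursion relations make the `σ₃`-part of
`ρ(n)_x - [U, ρ(n)]` vanish term by term, while its `σ₊`- and `σ₋`-parts telescope in `j`; the
boundary relations kill the `j = 0` end, leaving only the top-degree contributions
`λ b_{2n+1,x}` and `λ c_{2n+1,x}`.
-/

open Complex Matrix Finset

namespace KaupNewell

section SlTwo

variable {R : Type*} [CommRing R]

def slTwo (a b c : R) : Matrix (Fin 2) (Fin 2) R := !![a, b; c, -a]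

theorem smul_add_smul_add_smul_eq_slTwo (a b c : R) :
    a • !![1, 0; 0, -1] + b • !![0, 1; 0, 0] + c • !![0, 0; 1, 0] = slTwo a b c := by
  ext i j; fin_cases i <;> fin_cases j <;> simp [slTwo]

theorem smul_add_smul_eq_slTwo (b c : R) :
    b • !![0, 1; 0, 0] + c • !![0, 0; 1, 0] = slTwo 0 b c := by
  ext i j; fin_cases i <;> fin_cases j <;> simp [slTwo]

theorem slTwo_sub (a b c a' b' c' : R) :
    slTwo a b c - slTwo a' b' c' = slTwo (a - a') (b - b') (c - c') := by
  ext i j; fin_cases i <;> fin_cases j <;> simp [slTwo, sub_eq_add_neg, add_comm]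

theorem sum_slTwo {ι : Type*} (s : Finset ι) (a b c : ι → R) :
    ∑ i ∈ s, slTwo (a i) (b i) (c i) =
      slTwo (∑ i ∈ s, a i) (∑ i ∈ s, b i) (∑ i ∈ s, c i) := by
  ext i j; fin_cases i <;> fin_cases j <;> simp [slTwo, Matrix.sum_apply]

theorem slTwo_mul_sub_mul (a b c a' b' c' : R) :
    slTwo a b c * slTwo a' b' c' - slTwo a' b' c' * slTwo a b c =
      slTwo (b * c' - c * b') (2 * (a * b' - b * a')) (2 * (c * a' - a * c')) := by
  ext i j; fin_cases i <;> fin_cases j <;> simp [slTwo] <;> ring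

end SlTwo

theorem sum_range_sub_mul_odd_pow {R : Type*} [CommRing R] (f : ℕ → R) (l : R) (n : ℕ) :
    ∑ j ∈ range (n + 1), (f (j + 1) * l ^ (2 * (n - j) + 1) - f j * l ^ (2 * (n - j) + 3)) =
      f (n + 1) * l - f 0 * l ^ (2 * n + 3) := by
  set g : ℕ → R := fun j => f j * l ^ (2 * (n + 1 - j) + 1)
  have hg : ∀ j ∈ range (n + 1),
      f (j + 1) * l ^ (2 * (n - j) + 1) - f j * l ^ (2 * (n - j) + 3) = g (j + 1) - g j := by
    intro j hmem
    have hj : j ≤ n := Nat.le_of_lt_succ (mem_range.mp hmem)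
    simp only [g, Nat.add_sub_add_right, show 2 * (n + 1 - j) + 1 = 2 * (n - j) + 3 by omega]
  rw [sum_congr rfl hg, sum_range_sub]
  simp [g, mul_add, pow_succ]

def U (l q r : ℂ) : Matrix (Fin 2) (Fin 2) ℂ := slTwo (-I * l ^ 2) (l * q) (l * r)

/-- `ρ(n) = (λ^{2n+2} V)₊`, where `a j`, `b j`, `c j` stand for `a_{2j}`, `b_{2j+1}`, `c_{2j+1}`. -/
def truncatedV (n : ℕ) (l : ℂ) (a b c : ℕ → ℂ) : Matrix (Fin 2) (Fin 2) ℂ :=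
  ∑ j ∈ range (n + 1),
    slTwo (a j * l ^ (2 * (n - j) + 2)) (b j * l ^ (2 * (n - j) + 1))
      (c j * l ^ (2 * (n - j) + 1))

theorem U_mul_sub_mul (l q r a b c : ℂ) (m : ℕ) :
    U l q r * slTwo (a * l ^ (m + 2)) (b * l ^ (m + 1)) (c * l ^ (m + 1)) -
        slTwo (a * l ^ (m + 2)) (b * l ^ (m + 1)) (c * l ^ (m + 1)) * U l q r =
      slTwo ((q * c - r * b) * l ^ (m + 2)) ((-2 * I * b - 2 * q * a) * l ^ (m + 3))
        ((2 * I * c + 2 * r * a) * l ^ (m + 3)) := by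
  rw [U, slTwo_mul_sub_mul]
  congr 1 <;> ring

theorem truncatedV_sub_U_commutator (n : ℕ) (l q r : ℂ) (a b c a' b' c' : ℕ → ℂ)
    (ha : ∀ j, a' j = q * c j - r * b j)
    (hb : ∀ j, b' j = -2 * I * b (j + 1) - 2 * q * a (j + 1))
    (hc : ∀ j, c' j = 2 * I * c (j + 1) + 2 * r * a (j + 1))
    (hb₀ : -2 * I * b 0 - 2 * q * a 0 = 0) (hc₀ : 2 * I * c 0 + 2 * r * a 0 = 0) :
    truncatedV n l a' b' c' -
        (U l q r * truncatedV n l a b c - truncatedV n l a b c * U l q r) =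
      slTwo 0 (l * b' n) (l * c' n) := by
  rw [truncatedV, truncatedV, mul_sum, sum_mul, ← sum_sub_distrib, ← sum_sub_distrib]
  simp only [U_mul_sub_mul, slTwo_sub, ha, hb, hc, sub_self, sum_slTwo, sum_const_zero]
  rw [sum_range_sub_mul_odd_pow (fun k => -2 * I * b k - 2 * q * a k),
    sum_range_sub_mul_odd_pow (fun k => 2 * I * c k + 2 * r * a k), hb₀, hc₀]
  congr 1 <;> ring

end KaupNewell

/-- For the Kaup–Newell system, with `ρ(n) = (λ^{2n+2}V)₊` and
`U = −iλ²σ₃ + λqσ₊ + λrσ₋`, one has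
`ρ(n)_x − [U, ρ(n)] = λ(b_{2n+1,x} σ₊ + c_{2n+1,x} σ₋)`, provided the coefficients
satisfy the Kaup–Newell recursion relations.  Here `A j`, `B j`, `C j` denote
`a_{2j}`, `b_{2j+1}`, `c_{2j+1}` respectively, and the `j = 0` boundary relations
come from `b_{−1} = c_{−1} = 0`. -/
theorem kaup_newell_truncation_identity (n : ℕ) (q r : ℝ → ℂ) (A B C : ℕ → ℝ → ℂ)
    (hA : ∀ j x, HasDerivAt (A j) (q x * C j x - r x * B j x) x)
    (hB : ∀ j x, HasDerivAt (B j) (-2 * I * B (j + 1) x - 2 * q x * A (j + 1) x) x)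
    (hC : ∀ j x, HasDerivAt (C j) (2 * I * C (j + 1) x + 2 * r x * A (j + 1) x) x)
    (hbd1 : ∀ x : ℝ, -2 * I * B 0 x - 2 * q x * A 0 x = 0)
    (hbd2 : ∀ x : ℝ, 2 * I * C 0 x + 2 * r x * A 0 x = 0) :
    let s3 : Matrix (Fin 2) (Fin 2) ℂ := !![1, 0; 0, -1]
    let sp : Matrix (Fin 2) (Fin 2) ℂ := !![0, 1; 0, 0]
    let sm : Matrix (Fin 2) (Fin 2) ℂ := !![0, 0; 1, 0]
    let U : ℂ → ℝ → Matrix (Fin 2) (Fin 2) ℂ := fun l x =>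
      (-I * l ^ 2) • s3 + (l * q x) • sp + (l * r x) • sm
    let ρ : ℂ → ℝ → Matrix (Fin 2) (Fin 2) ℂ := fun l x =>
      ∑ j ∈ range (n + 1),
        ((A j x * l ^ (2 * (n - j) + 2)) • s3 +
          (B j x * l ^ (2 * (n - j) + 1)) • sp +
          (C j x * l ^ (2 * (n - j) + 1)) • sm)
    let ρx : ℂ → ℝ → Matrix (Fin 2) (Fin 2) ℂ := fun l x =>
      ∑ j ∈ range (n + 1),
        ((deriv (A j) x * l ^ (2 * (n - j) + 2)) • s3 +
          (deriv (B j) x * l ^ (2 * (n - j) + 1)) • sp +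
          (deriv (C j) x * l ^ (2 * (n - j) + 1)) • sm)
    ∀ (l : ℂ) (x : ℝ),
      ρx l x - (U l x * ρ l x - ρ l x * U l x) =
        (l * deriv (B n) x) • sp + (l * deriv (C n) x) • sm := by
  intro s3 sp sm U ρ ρx l x
  simp only [s3, sp, sm, U, ρ, ρx, KaupNewell.smul_add_smul_add_smul_eq_slTwo,
    KaupNewell.smul_add_smul_eq_slTwo]
  exact KaupNewell.truncatedV_sub_U_commutator n l (q x) (r x) (A · x) (B · x) (C · x)
    (fun j => deriv (A j) x) (fun j => deriv (B j) x) (fun j => deriv (C j) x)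
    (fun j => (hA j x).deriv) (fun j => (hB j x).deriv) (fun j => (hC j x).deriv) (hbd1 x) (hbd2 x)
end
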